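/- arXiv:2501.15171 — 2 statements merged into one kernel-verified Lean document; each statement's English description precedes it below -/
import Mathlib

section
/- For an essential mod r tropical type τ of genus g, the quantity k_τ := b₁(Γ) + 2·Σ_{v∈V₊} g_v − |V₊| satisfies 0 ≤ k_τ ≤ max(2g − 1, 0). Moreover k_τ = 0 if and only if V₊ = ∅ and b₁(Γ) = 0 (the trivial type), and for g > 0, k_τ = 2g − 1 if and only if b₁(Γ) = 0, every external vertex has genus 0, and |V₊| = 1 with the unique internal vertex of genus g. -/
/-- A multigraph: edges with source and target maps to the vertices. -/
structure Multigraph (V E : Type*) where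
  src : E → V
  tgt : E → V

/-- Adjacency relation of a multigraph. -/
def Multigraph.Adj {V E : Type*} (G : Multigraph V E) (a b : V) : Prop :=
  ∃ e : E, (G.src e = a ∧ G.tgt e = b) ∨ (G.src e = b ∧ G.tgt e = a)

/-- Number of connected components. -/
noncomputable def Multigraph.b0 {V E : Type*} (G : Multigraph V E) : ℕ :=
  Nat.card (Quot G.Adj)

/-- First Betti number `b₁(Γ) = |E| + b₀(Γ) - |V|`. -/
noncomputable def Multigraph.b1 {V E : Type*} (G : Multigraph V E) : ℕ :=
  Nat.card E + G.b0 - Nat.card V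

/-- For an essential mod `r` tropical type `τ` of genus `g` (a finite
connected graph `Γ`, bipartite with respect to the partition `V = V₀ ⊔ V₊`, with genus
labels satisfying `Σ_v g_v + b₁(Γ) = g` and `g_v > 0` for every internal vertex), the
quantity `k_τ := b₁(Γ) + 2·Σ_{v∈V₊} g_v - |V₊|` satisfies `0 ≤ k_τ ≤ max (2g-1) 0`.
Moreover `k_τ = 0` iff `V₊ = ∅` and `b₁(Γ) = 0` (the trivial type), and for `g > 0`,
`k_τ = 2g-1` iff `b₁(Γ) = 0`, every external vertex has genus `0`, and `|V₊| = 1` with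
the unique internal vertex of genus `g`. -/
theorem stmt_3 {V E : Type*} [Fintype V] [Fintype E] (G : Multigraph V E)
    (Vplus : Finset V) (gv : V → ℕ) (g : ℕ)
    (hconn : G.b0 = 1)
    (hbip : ∀ e : E, (G.src e ∈ Vplus ∧ G.tgt e ∉ Vplus) ∨
      (G.src e ∉ Vplus ∧ G.tgt e ∈ Vplus))
    (hess : ∀ v ∈ Vplus, 0 < gv v)
    (hg : ∑ v, gv v + G.b1 = g) :
    (0 ≤ (G.b1 : ℤ) + 2 * (∑ v ∈ Vplus, (gv v : ℤ)) - Vplus.card ∧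
      (G.b1 : ℤ) + 2 * (∑ v ∈ Vplus, (gv v : ℤ)) - Vplus.card ≤ max (2 * (g : ℤ) - 1) 0) ∧
    ((G.b1 : ℤ) + 2 * (∑ v ∈ Vplus, (gv v : ℤ)) - Vplus.card = 0 ↔
      Vplus = ∅ ∧ G.b1 = 0) ∧
    (0 < g →
      ((G.b1 : ℤ) + 2 * (∑ v ∈ Vplus, (gv v : ℤ)) - Vplus.card = 2 * (g : ℤ) - 1 ↔
        G.b1 = 0 ∧ (∀ v ∉ Vplus, gv v = 0) ∧ Vplus.card = 1 ∧ ∀ v ∈ Vplus, gv v = g)) := by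
  classical
  have hPS : Vplus.card ≤ ∑ v ∈ Vplus, gv v := by
    calc Vplus.card = ∑ _v ∈ Vplus, 1 := by simp
    _ ≤ ∑ v ∈ Vplus, gv v := Finset.sum_le_sum (fun v hv => hess v hv)
  have hTS : ∑ v, gv v = ∑ v ∈ Vplus, gv v + ∑ v ∈ Vplusᶜ, gv v :=
    (Finset.sum_add_sum_compl Vplus gv).symm
  have hempty : Vplus = ∅ → G.b1 = 0 := by
    intro hVp
    have hE : IsEmpty E := ⟨fun e => by
      rcases hbip e with ⟨h, _⟩ | ⟨_, h⟩ <;> simp [hVp] at h⟩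
    have hAdj : ∀ a b, ¬ G.Adj a b := fun a b ⟨e, _⟩ => hE.elim e
    have hinj : Function.Injective (Quot.mk G.Adj) := by
      intro a b h
      have h2 := Quot.eq.mp h
      clear h
      induction h2 with
      | rel x y h' => exact absurd h' (hAdj x y)
      | refl => rfl
      | symm x y _ ih => exact ih.symm
      | trans x y z _ _ ih1 ih2 => exact ih1.trans ih2
    have hcard : Nat.card V = Nat.card (Quot G.Adj) :=
      Nat.card_eq_of_bijective _ ⟨hinj, fun q => Quot.exists_rep q⟩
    have hV1 : Nat.card V = 1 := by rw [hcard]; exact hconn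
    rw [Nat.card_eq_fintype_card] at hV1
    simp [Multigraph.b1, Multigraph.b0] at hconn ⊢
    simp [hconn, hV1, Nat.card_of_isEmpty]
  have hP0 : Vplus.card = 0 → G.b1 = 0 := fun h =>
    hempty (Finset.card_eq_zero.mp h)
  have hcast : (∑ v ∈ Vplus, (gv v : ℤ)) = ((∑ v ∈ Vplus, gv v : ℕ) : ℤ) := by
    push_cast; rfl
  rw [hcast]
  set S := ∑ v ∈ Vplus, gv v with hS
  set T := ∑ v, gv v with hT
  set P := Vplus.card with hP
  set b := G.b1 with hb
  have hST : S ≤ T := by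
    rw [hTS]; omega
  have hcase : (P = 0 ∧ S = 0 ∧ b = 0) ∨ 1 ≤ P := by
    rcases Nat.eq_zero_or_pos P with h | h
    · have hVe := Finset.card_eq_zero.mp h
      exact Or.inl ⟨h, by rw [hS, hVe]; simp, hP0 h⟩
    · exact Or.inr h
  refine ⟨⟨by omega, ?_⟩, ⟨?_, ?_⟩, ?_⟩
  · omega
  · intro h
    have hS0 : S = 0 ∧ b = 0 := by omega
    have : P = 0 := by omega
    exact ⟨Finset.card_eq_zero.mp this, hS0.2⟩
  · rintro ⟨h1, h2⟩
    have hP0' : P = 0 := by rw [hP, h1]; simp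
    have hS0' : S = 0 := by rw [hS, h1]; simp
    omega
  · intro hgpos
    constructor
    · intro h
      have key : b = 0 ∧ P = 1 ∧ S = T ∧ S = g := by omega
      obtain ⟨hb0, hP1, hSTeq, hSg⟩ := key
      have hcompl : ∑ v ∈ Vplusᶜ, gv v = 0 := by omega
      refine ⟨hb0, ?_, hP1, ?_⟩
      · intro v hv
        exact Finset.sum_eq_zero_iff.mp hcompl v (Finset.mem_compl.mpr hv)
      · intro v hv
        obtain ⟨v₀, hv0⟩ := Finset.card_eq_one.mp hP1
        have hveq : v = v₀ := by
          rw [hv0] at hv; exact Finset.mem_singleton.mp hv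
        have : S = gv v₀ := by rw [hS, hv0, Finset.sum_singleton]
        rw [hveq]; omega
    · rintro ⟨hb0, hout, hP1, hin⟩
      obtain ⟨v₀, hv0⟩ := Finset.card_eq_one.mp hP1
      have hSg : S = g := by
        rw [hS, hv0, Finset.sum_singleton]
        exact hin v₀ (by rw [hv0]; exact Finset.mem_singleton_self v₀)
      omega
end

section
/- Let g: A → B be the group homomorphism obtained by restricting the λ-power map (ℤ/λrℤ)^E → (ℤ/rℤ)^E (via the identifications μ_{t(λr)} ≅ appropriate cyclic subgroups) to the subgroups cut out by the cycle equations, in the situation where all slopes m_e divide r and m_e ≠ 0. Then |ker(g)| = λ^{|E(T)|}. Equivalently, abstractly: given a finite connected graph Γ with spanning tree T, integers m_e dividing r with m_e ≥ 1, the kernel of the natural reduction map from the solution group of {Σ_{e'∈C_e} m_{e'} a_{e'} ≡ 0 mod λr} ⊂ ∏_e ℤ/(λr/m_e)ℤ to the solution group of the analogous system mod r fits in a short exact sequence 0 → (ℤ/gcd(λ,r)ℤ)^{|E(T)|} → ker(g) → (ℤ/(λ/gcd(λ,r))ℤ)^{|E(T)|} → 0, hence has order λ^{|E(T)|}. -/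
lemma key7 {r lam : ℕ} (hr : 0 < r) (hlam : 0 < lam) (x : ℕ) :
    ((r * x : ℕ) : ZMod (lam * r)) = 0 ↔ ((x : ℕ) : ZMod lam) = 0 := by
  haveI : NeZero (lam * r) := ⟨Nat.mul_ne_zero hlam.ne' hr.ne'⟩
  haveI : NeZero lam := ⟨hlam.ne'⟩
  rw [ZMod.natCast_eq_zero_iff, ZMod.natCast_eq_zero_iff,
    mul_comm lam r, Nat.mul_dvd_mul_iff_left hr]


/-- Kernel of the comparison of cycle-equation solution groups.  Let `Γ` be
a finite connected graph with spanning tree `T` and fundamental cycles `C e` (for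
`e ∉ T`; each contains `e` as its unique non-tree edge), and let `m_e ≥ 1` be integers
dividing `r`.  The solution group of `{Σ_{e'∈C_e} m_{e'}·a_{e'} ≡ 0 mod λr}` inside
`∏_e ℤ/(λr/m_e)ℤ` maps to the analogous solution group mod `r` via the componentwise
reduction `ℤ/(λr/m_e)ℤ → ℤ/(r/m_e)ℤ` (induced by `ℤ/λrℤ → ℤ/rℤ`).  Its kernel `ker g`
— the set of solutions mod `λr` whose componentwise reduction mod `r/m_e` vanishes —
fits in a short exact sequence
`0 → (ℤ/gcd(λ,r)ℤ)^{|E(T)|} → ker g → (ℤ/(λ/gcd(λ,r))ℤ)^{|E(T)|} → 0`,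
hence has order `λ^{|E(T)|}`. -/
theorem stmt_7 {E : Type*} [Fintype E] [DecidableEq E] (r lam : ℕ)
    (hr : 0 < r) (hlam : 0 < lam)
    (T : Finset E) (C : E → Finset E)
    (hmem : ∀ e ∉ T, e ∈ C e)
    (huniq : ∀ e ∉ T, ∀ e' ∈ C e, e' ∉ T → e' = e)
    (m : E → ℕ) (hmdvd : ∀ e, m e ∣ r) (hm1 : ∀ e, 1 ≤ m e) :
    Nat.card
      {a : ∀ e : E, ZMod (lam * r / m e) //
        (∀ e ∉ T, ∑ e' ∈ C e, ((m e' * (a e').val : ℕ) : ZMod (lam * r)) = 0) ∧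
        ∀ e : E, (((a e).val : ℕ) : ZMod (r / m e)) = 0} = lam ^ T.card ∧
    Nonempty
      ({a : ∀ e : E, ZMod (lam * r / m e) //
        (∀ e ∉ T, ∑ e' ∈ C e, ((m e' * (a e').val : ℕ) : ZMod (lam * r)) = 0) ∧
        ∀ e : E, (((a e).val : ℕ) : ZMod (r / m e)) = 0} ≃
        (({e : E // e ∈ T} → ZMod (Nat.gcd lam r)) ×
          ({e : E // e ∈ T} → ZMod (lam / Nat.gcd lam r)))) := by
  -- notation
  set k : E → ℕ := fun e => r / m e with hk_def
  have hk : ∀ e, 0 < k e := fun e => Nat.div_pos (Nat.le_of_dvd hr (hmdvd e)) (hm1 e)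
  have hmk : ∀ e, m e * k e = r := fun e => Nat.mul_div_cancel' (hmdvd e)
  have hN : ∀ e, lam * r / m e = lam * k e := fun e => Nat.mul_div_assoc lam (hmdvd e)
  haveI : NeZero lam := ⟨hlam.ne'⟩
  haveI instN : ∀ e : E, NeZero (lam * r / m e) := fun e =>
    ⟨by rw [hN e]; exact (Nat.mul_pos hlam (hk e)).ne'⟩
  haveI instk : ∀ e : E, NeZero (k e) := fun e => ⟨(hk e).ne'⟩
  -- the solution set S and intermediate set S'
  -- Equiv 1 : S ≃ S'
  have cast_val : ∀ (e : E) (v : ℕ), v < lam →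
      (((k e * v : ℕ) : ZMod (lam * r / m e)).val) = k e * v := by
    intro e v hv
    rw [ZMod.val_natCast, Nat.mod_eq_of_lt]
    rw [hN e, mul_comm lam (k e)]
    exact (Nat.mul_lt_mul_left (hk e)).mpr hv
  have e1 :
      {a : ∀ e : E, ZMod (lam * r / m e) //
        (∀ e ∉ T, ∑ e' ∈ C e, ((m e' * (a e').val : ℕ) : ZMod (lam * r)) = 0) ∧
        ∀ e : E, (((a e).val : ℕ) : ZMod (r / m e)) = 0} ≃
      {b : E → ZMod lam // ∀ e ∉ T, ∑ e' ∈ C e, b e' = 0} := by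
    -- divisibility form of the second condition
    have dvd_of : ∀ (a : ∀ e : E, ZMod (lam * r / m e)),
        (∀ e : E, (((a e).val : ℕ) : ZMod (r / m e)) = 0) → ∀ e, k e ∣ (a e).val := by
      intro a h e
      have := h e
      rwa [ZMod.natCast_eq_zero_iff] at this
    refine ⟨fun a => ⟨fun e => (((a.1 e).val / k e : ℕ) : ZMod lam), ?_⟩,
      fun b => ⟨fun e => ((k e * (b.1 e).val : ℕ) : ZMod (lam * r / m e)), ?_, ?_⟩, ?_, ?_⟩
    · -- forward condition
      intro e he
      obtain ⟨hc1, hc2⟩ := a.2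
      have h1 := hc1 e he
      have hdvd := dvd_of a.1 hc2
      have : ∀ e', m e' * (a.1 e').val = r * ((a.1 e').val / k e') := by
        intro e'
        obtain ⟨c, hc⟩ := hdvd e'
        rw [hc, Nat.mul_div_cancel_left c (hk e'), ← mul_assoc, hmk e']
      rw [Finset.sum_congr rfl (fun e' _ => by rw [this e'])] at h1
      rw [← Nat.cast_sum, ← Finset.mul_sum, key7 hr hlam] at h1
      rw [← h1, Nat.cast_sum]
    · -- backward condition 1
      intro e he
      have h1 := b.2 e he
      have : ∀ e', (m e' * (((k e' * (b.1 e').val : ℕ) : ZMod (lam * r / m e')).val) : ℕ)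
          = r * (b.1 e').val := by
        intro e'
        rw [cast_val e' _ (ZMod.val_lt (b.1 e')), ← mul_assoc, hmk e']
      rw [Finset.sum_congr rfl (fun e' _ => by rw [this e'])]
      rw [← Nat.cast_sum, ← Finset.mul_sum, key7 hr hlam, Nat.cast_sum]
      rw [Finset.sum_congr rfl (fun e' _ => (ZMod.natCast_rightInverse (b.1 e')))]
      exact h1
    · -- backward condition 2
      intro e
      rw [ZMod.natCast_eq_zero_iff, cast_val e _ (ZMod.val_lt (b.1 e))]
      exact Dvd.intro _ rfl
    · -- left inverse
      rintro ⟨a, ha1, ha2⟩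
      ext e
      simp only
      obtain ⟨c, hc⟩ := dvd_of a ha2 e
      have hclt : c < lam := by
        have h3 : k e * c < k e * lam := by
          rw [mul_comm (k e) lam, ← hN e, ← hc]
          exact ZMod.val_lt (a e)
        exact (Nat.mul_lt_mul_left (hk e)).mp h3
      rw [hc, Nat.mul_div_cancel_left c (hk e), ZMod.val_natCast, Nat.mod_eq_of_lt hclt,
        ← hc]
      exact ZMod.natCast_rightInverse (a e)
    · -- right inverse
      rintro ⟨b, hb⟩
      ext e
      simp only
      rw [cast_val e _ (ZMod.val_lt (b e)), Nat.mul_div_cancel_left _ (hk e)]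
      exact ZMod.natCast_rightInverse (b e)
  -- Equiv 2 : S' ≃ (T → ZMod lam)
  have e2 :
      {b : E → ZMod lam // ∀ e ∉ T, ∑ e' ∈ C e, b e' = 0} ≃
      ({e : E // e ∈ T} → ZMod lam) := by
    refine ⟨fun b t => b.1 t.1,
      fun t => ⟨fun e => if h : e ∈ T then t ⟨e, h⟩ else
        -∑ e' ∈ (C e).erase e, (if h' : e' ∈ T then t ⟨e', h'⟩ else 0), ?_⟩, ?_, ?_⟩
    · intro e he
      have hsum : ∑ e' ∈ C e, (fun e => if h : e ∈ T then t ⟨e, h⟩ else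
          -∑ e' ∈ (C e).erase e, (if h' : e' ∈ T then t ⟨e', h'⟩ else 0)) e'
          = (if h : e ∈ T then t ⟨e, h⟩ else
          -∑ e' ∈ (C e).erase e, (if h' : e' ∈ T then t ⟨e', h'⟩ else 0))
            + ∑ e' ∈ (C e).erase e, (if h' : e' ∈ T then t ⟨e', h'⟩ else 0) := by
        rw [← Finset.add_sum_erase _ _ (hmem e he)]
        congr 1
        refine Finset.sum_congr rfl ?_
        intro e' he'
        have heT : e' ∈ T := by
          by_contra h'
          exact (Finset.mem_erase.mp he').1 (huniq e he e' (Finset.mem_of_mem_erase he') h')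
        simp [heT]
      rw [hsum, dif_neg he, neg_add_cancel]
    · rintro ⟨b, hb⟩
      ext e
      simp only
      by_cases h : e ∈ T
      · rw [dif_pos h]
      · rw [dif_neg h]
        have h1 := hb e h
        rw [← Finset.add_sum_erase _ _ (hmem e h)] at h1
        have : ∑ e' ∈ (C e).erase e, (if h' : e' ∈ T then b e' else 0)
            = ∑ e' ∈ (C e).erase e, b e' := by
          refine Finset.sum_congr rfl ?_
          intro e' he'
          have heT : e' ∈ T := by
            by_contra h'
            exact (Finset.mem_erase.mp he').1 (huniq e h e' (Finset.mem_of_mem_erase he') h')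
          simp [heT]
        rw [this]
        linear_combination -h1
    · intro t
      funext x
      simp [x.2]
  -- finiteness and cardinality
  have hcard : Nat.card
      {a : ∀ e : E, ZMod (lam * r / m e) //
        (∀ e ∉ T, ∑ e' ∈ C e, ((m e' * (a e').val : ℕ) : ZMod (lam * r)) = 0) ∧
        ∀ e : E, (((a e).val : ℕ) : ZMod (r / m e)) = 0} = lam ^ T.card := by
    rw [Nat.card_congr (e1.trans e2), Nat.card_fun]
    simp [Nat.card_zmod, Fintype.card_coe]
  refine ⟨hcard, ?_⟩
  haveI : Finite {a : ∀ e : E, ZMod (lam * r / m e) //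
        (∀ e ∉ T, ∑ e' ∈ C e, ((m e' * (a e').val : ℕ) : ZMod (lam * r)) = 0) ∧
        ∀ e : E, (((a e).val : ℕ) : ZMod (r / m e)) = 0} :=
    Finite.of_equiv _ (e1.trans e2).symm
  haveI : NeZero (Nat.gcd lam r) := ⟨fun h => hlam.ne' (Nat.eq_zero_of_gcd_eq_zero_left h)⟩
  haveI : NeZero (lam / Nat.gcd lam r) :=
    ⟨(Nat.div_pos (Nat.le_of_dvd hlam (Nat.gcd_dvd_left lam r))
      (Nat.gcd_pos_of_pos_left r hlam)).ne'⟩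
  rw [← Finite.card_eq]
  rw [hcard, Nat.card_prod, Nat.card_fun, Nat.card_fun]
  simp only [Nat.card_eq_fintype_card, Fintype.card_coe]
  rw [ZMod.card, ZMod.card, ← Nat.mul_pow, Nat.mul_div_cancel' (Nat.gcd_dvd_left lam r)]
end
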